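/- Let Y^(1),…,Y^(N) be multi-object trajectories with L = Σ_{n=1}^N |Y^(n)| ≥ 1, and assume κ(L, m) = κ̄(L) > 0 for every m ≤ L. Let Ȳ = Y^(1) ⊎ ⋯ ⊎ Y^(N) be their multiset sum, so |Ȳ| = L. Then the Fréchet cost of Ȳ satisfies Σ_{n=1}^N d(Ȳ, Y^(n))^r ≤ (N−1) p^r L / κ̄(L). -/

import Mathlib

open scoped BigOperators

/-- A trajectory on the time window `{1,…,K}` (modeled as `Fin K`): a domain together
with a state map (values outside the domain are irrelevant). -/
structure Traj (K : ℕ) (X : Type*) where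
  dom : Finset (Fin K)
  toFun : Fin K → X

/-- Per-time cost `e_{u,v}(k)` with base metric cut off at `c`. -/
noncomputable def ecost {K : ℕ} {X : Type*} [MetricSpace X] (c : ℝ) (u v : Traj K X)
    (k : Fin K) : ℝ :=
  if k ∈ u.dom ∩ v.dom then min (dist (u.toFun k) (v.toFun k)) c
  else if k ∈ u.dom ∪ v.dom then c
  else 0

/-- OSPA trajectory distance of order `r` and cut-off `c`. -/
noncomputable def dT {K : ℕ} {X : Type*} [MetricSpace X] (c r : ℝ) (u v : Traj K X) : ℝ :=
  if u.dom ∪ v.dom = ∅ then 0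
  else ((∑ k ∈ u.dom ∪ v.dom, ecost c u v k ^ r) / ((u.dom ∪ v.dom).card : ℝ)) ^ (1 / r)

/-- OSPA-based multi-object trajectory distance of order `r`, cardinality penalty `p`,
cut-off `c` and normalization `κ`. -/
noncomputable def dMOT {K : ℕ} {X : Type*} [MetricSpace X] (κ : ℕ → ℕ → ℝ)
    (p c r : ℝ) (A B : Multiset (Traj K X)) : ℝ :=
  (sInf { q : ℝ | ∃ l : List (Traj K X × Traj K X),
      (↑(l.map Prod.fst) : Multiset (Traj K X)) = (if A.card ≤ B.card then A else B) ∧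
      (↑(l.map Prod.snd) : Multiset (Traj K X)) ≤ (if A.card ≤ B.card then B else A) ∧
      q = ((l.map fun e => dT c r e.1 e.2 ^ r).sum
            + ((max A.card B.card - min A.card B.card : ℕ) : ℝ) * p ^ r)
          / κ (max A.card B.card) (min A.card B.card) }) ^ (1 / r)

/-!
Every `Y n` is a sub-multiset of `Ȳ`, so matching each trajectory of `Y n` with its own copy
in `Ȳ` costs nothing but the penalty `p ^ r` for the `L - |Y n|` unmatched trajectories of `Ȳ`.
Hence `d(Ȳ, Y n) ^ r ≤ (L - |Y n|) p ^ r / κ̄`, and summing over `n` gives `(N L - L) p ^ r / κ̄`.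
-/

section TrajectoryDistance

variable {K : ℕ} {X : Type*} [MetricSpace X] {c r : ℝ}

lemma ecost_nonneg (hc : 0 ≤ c) (u v : Traj K X) (k : Fin K) : 0 ≤ ecost c u v k := by
  unfold ecost
  split_ifs
  exacts [le_min dist_nonneg hc, hc, le_rfl]

lemma ecost_self (hc : 0 ≤ c) (u : Traj K X) (k : Fin K) : ecost c u u k = 0 := by
  by_cases hk : k ∈ u.dom <;> simp [ecost, hk, hc]

lemma dT_nonneg (hc : 0 ≤ c) (u v : Traj K X) : 0 ≤ dT c r u v := by
  unfold dT
  split_ifs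
  · exact le_rfl
  · exact Real.rpow_nonneg (div_nonneg
      (Finset.sum_nonneg fun k _ => Real.rpow_nonneg (ecost_nonneg hc u v k) r)
      (Nat.cast_nonneg _)) _

lemma dT_self (hc : 0 ≤ c) (hr : r ≠ 0) (u : Traj K X) : dT c r u u = 0 := by
  simp [dT, ecost_self hc, Real.zero_rpow hr, Real.zero_rpow (inv_ne_zero hr)]

end TrajectoryDistance

section MultiObjectDistance

variable {K : ℕ} {X : Type*} [MetricSpace X] {κ : ℕ → ℕ → ℝ} {p c r : ℝ}

def dMOTCosts (κ : ℕ → ℕ → ℝ) (p c r : ℝ) (A B : Multiset (Traj K X)) : Set ℝ :=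
  { q : ℝ | ∃ l : List (Traj K X × Traj K X),
      (↑(l.map Prod.fst) : Multiset (Traj K X)) = (if A.card ≤ B.card then A else B) ∧
      (↑(l.map Prod.snd) : Multiset (Traj K X)) ≤ (if A.card ≤ B.card then B else A) ∧
      q = ((l.map fun e => dT c r e.1 e.2 ^ r).sum
            + ((max A.card B.card - min A.card B.card : ℕ) : ℝ) * p ^ r)
          / κ (max A.card B.card) (min A.card B.card) }

lemma dMOT_eq_sInf_dMOTCosts (A B : Multiset (Traj K X)) :
    dMOT κ p c r A B = sInf (dMOTCosts κ p c r A B) ^ (1 / r) :=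
  rfl

lemma dMOTCosts_nonneg (hc : 0 ≤ c) (hp : 0 ≤ p) {A B : Multiset (Traj K X)}
    (hκ : 0 ≤ κ (max A.card B.card) (min A.card B.card)) :
    ∀ q ∈ dMOTCosts κ p c r A B, 0 ≤ q := by
  rintro q ⟨l, -, -, rfl⟩
  refine div_nonneg (add_nonneg (List.sum_nonneg ?_) ?_) hκ
  · simp only [List.mem_map]
    rintro _ ⟨e, -, rfl⟩
    exact Real.rpow_nonneg (dT_nonneg hc _ _) r
  · exact mul_nonneg (Nat.cast_nonneg _) (Real.rpow_nonneg hp r)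

/-- Matching `B` with its own copy inside `A ≥ B` leaves only the cardinality penalty. -/
lemma penalty_mem_dMOTCosts_of_le (hc : 0 ≤ c) (hr : r ≠ 0) {A B : Multiset (Traj K X)}
    (hBA : B ≤ A) :
    ((A.card - B.card : ℕ) : ℝ) * p ^ r / κ A.card B.card ∈ dMOTCosts κ p c r A B := by
  have hcard : B.card ≤ A.card := Multiset.card_le_card hBA
  have hdiag_fst : ((B.toList.map fun y => (y, y)).map Prod.fst : Multiset (Traj K X)) = B := by
    simp [Function.comp_def]
  have hdiag_snd : ((B.toList.map fun y => (y, y)).map Prod.snd : Multiset (Traj K X)) = B := by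
    simp [Function.comp_def]
  refine ⟨B.toList.map fun y => (y, y), ?_, ?_, ?_⟩
  · rw [hdiag_fst]
    split_ifs with h
    exacts [Multiset.eq_of_le_of_card_le hBA h, rfl]
  · rw [hdiag_snd]
    split_ifs
    exacts [le_rfl, hBA]
  · have hdiag : ((B.toList.map fun y => (y, y)).map fun e => dT c r e.1 e.2 ^ r).sum = 0 := by
      simp [Function.comp_def, dT_self hc hr, Real.zero_rpow hr]
    rw [hdiag, zero_add, max_eq_left hcard, min_eq_right hcard]

lemma dMOT_rpow_le_of_le (hc : 0 ≤ c) (hr : r ≠ 0) (hp : 0 ≤ p) {A B : Multiset (Traj K X)}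
    (hBA : B ≤ A) (hκ : 0 ≤ κ A.card B.card) :
    dMOT κ p c r A B ^ r ≤ ((A.card - B.card : ℕ) : ℝ) * p ^ r / κ A.card B.card := by
  have hcard : B.card ≤ A.card := Multiset.card_le_card hBA
  have hnonneg := dMOTCosts_nonneg (r := r) hc hp (A := A) (B := B)
    (by rwa [max_eq_left hcard, min_eq_right hcard])
  rw [dMOT_eq_sInf_dMOTCosts, one_div, Real.rpow_inv_rpow (Real.sInf_nonneg hnonneg) hr]
  exact csInf_le ⟨0, hnonneg⟩ (penalty_mem_dMOTCosts_of_le hc hr hBA)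

end MultiObjectDistance

theorem multiset_sum_frechet_cost_bound_general {K N : ℕ} {X : Type*} [MetricSpace X]
    {c r p : ℝ} (hc : 0 < c) (hr : 1 ≤ r) (hp : 0 ≤ p)
    (κ : ℕ → ℕ → ℝ) (hκpos : ∀ s m, 0 < κ s m)
    (Y : Fin N → Multiset (Traj K X)) (L : ℕ) (hL : L = ∑ n, (Y n).card)
    (κbar : ℝ) (hκbar : ∀ m ≤ L, κ L m = κbar) :
    ∑ n, dMOT κ p c r (∑ m, Y m) (Y n) ^ r
      ≤ ((N : ℝ) - 1) * p ^ r * (L : ℝ) / κbar := by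
  have hr0 : r ≠ 0 := by linarith
  have hcard_sum : (∑ m, Y m).card = L := by rw [Multiset.card_sum, hL]
  have hle_sum (n : Fin N) : Y n ≤ ∑ m, Y m :=
    Finset.single_le_sum (fun _ _ => Multiset.zero_le _) (Finset.mem_univ n)
  have hcard_le (n : Fin N) : (Y n).card ≤ L := hcard_sum ▸ Multiset.card_le_card (hle_sum n)
  calc ∑ n, dMOT κ p c r (∑ m, Y m) (Y n) ^ r
      ≤ ∑ n, ((L - (Y n).card : ℕ) : ℝ) * p ^ r / κbar := by
        refine Finset.sum_le_sum fun n _ => ?_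
        have h := dMOT_rpow_le_of_le hc.le hr0 hp (hle_sum n) (hκpos _ _).le
        rwa [hcard_sum, hκbar _ (hcard_le n)] at h
    _ = ((N : ℝ) - 1) * p ^ r * (L : ℝ) / κbar := by
        simp only [Nat.cast_sub (hcard_le _), ← Finset.sum_div, ← Finset.sum_mul,
          Finset.sum_sub_distrib, ← Nat.cast_sum, ← hL, Finset.sum_const, Finset.card_univ,
          Fintype.card_fin, nsmul_eq_mul]
        push_cast
        ring

/-- The multiset sum `Ȳ = Y^(1) ⊎ ⋯ ⊎ Y^(N)` has Fréchet cost at most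
`(N−1) p^r L / κ̄(L)`. -/
theorem multiset_sum_frechet_cost_bound {K N : ℕ} {X : Type*} [MetricSpace X]
    (hK : 1 ≤ K) (hN : 1 ≤ N) {c r p : ℝ} (hc : 0 < c) (hr : 1 ≤ r) (hp : 0 ≤ p)
    (κ : ℕ → ℕ → ℝ) (hκpos : ∀ s m, 0 < κ s m) (hκsym : ∀ s m, κ s m = κ m s)
    (Y : Fin N → Multiset (Traj K X)) (L : ℕ) (hL : L = ∑ n, (Y n).card) (hL1 : 1 ≤ L)
    (κbar : ℝ) (hκbar : ∀ m ≤ L, κ L m = κbar) :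
    ∑ n, dMOT κ p c r (∑ m, Y m) (Y n) ^ r
      ≤ ((N : ℝ) - 1) * p ^ r * (L : ℝ) / κbar :=
  multiset_sum_frechet_cost_bound_general hc hr hp κ hκpos Y L hL κbar hκbar
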